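/- Let F be a field of characteristic not 2 and A a Vidinli algebra over F, i.e., a conic algebra with norm q such that [A,A] ⊆ F·1. Then A decomposes as A = F·1 ⊕ V with V = {x ∈ A : q(x,1) = 0}, and there is a bilinear form B on A such that for all α, β ∈ F and u, v ∈ V, (α1 + u)(β1 + v) = (αβ − B(u,v))·1 + αv + βu. -/

import Mathlib

/-!
Write `t(x) = q(x,1)` and `V = ker t`. Since `t(1) = 2q(1) = 2` is invertible, `F·1` and `V` are
complementary. For `u ∈ V` the conic equation reads `u² = -q(u)·1`; polarizing gives
`uv + vu = -q(u,v)·1` for `u, v ∈ V`, and together with `uv - vu ∈ F·1` this puts `uv` in `F·1`.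
Its scalar is recovered by `½ t`, so `B(x,y) = -½ t(xy)` is the required bilinear form.
-/

open QuadraticMap

section CommRing

variable {R A : Type*} [CommRing R] [NonAssocRing A] [Module R A] {q : QuadraticForm R A}

theorem mul_self_eq_neg_smul_one_of_polar_one_eq_zero {x : A}
    (hx : x * x - polar q x 1 • x + q x • (1 : A) = 0) (h0 : polar q x 1 = 0) :
    x * x = -q x • (1 : A) := by
  rw [h0, zero_smul, sub_zero] at hx
  linear_combination (norm := module) hx

theorem mul_add_mul_comm_eq_neg_polar_smul_one
    (hconic : ∀ x : A, x * x - polar q x 1 • x + q x • (1 : A) = 0) {u v : A}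
    (hu : polar q u 1 = 0) (hv : polar q v 1 = 0) :
    u * v + v * u = -polar q u v • (1 : A) := by
  have huv : polar q (u + v) 1 = 0 := by rw [polar_add_left, hu, hv, add_zero]
  have hu2 := mul_self_eq_neg_smul_one_of_polar_one_eq_zero (hconic u) hu
  have hv2 := mul_self_eq_neg_smul_one_of_polar_one_eq_zero (hconic v) hv
  have huv2 := mul_self_eq_neg_smul_one_of_polar_one_eq_zero (hconic (u + v)) huv
  rw [add_mul, mul_add, mul_add, hu2, hv2] at huv2
  rw [polar]
  linear_combination (norm := module) huv2

theorem polar_smul_one_one (hq1 : q 1 = 1) (c : R) : polar q (c • (1 : A)) 1 = 2 * c := by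
  rw [polar_smul_left, polar_self, hq1, smul_eq_mul, nsmul_eq_mul]
  ring

end CommRing

section Field

variable {F A : Type*} [Field F] [NonAssocRing A] [Module F A] {q : QuadraticForm F A}

theorem isCompl_span_one_ker_polar (hchar : (2 : F) ≠ 0) (hq1 : q 1 = 1) :
    IsCompl (F ∙ (1 : A)) (LinearMap.ker ((polarBilin q).flip 1)) := by
  have h := LinearMap.isCompl_span_singleton_orthogonal (B := (polarBilin q).flip) (x := (1 : A))
    (by simpa [polar_self, hq1] using hchar)
  rwa [LinearMap.orthogonal_span_singleton_eq_to_lin_ker] at h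

theorem mul_mem_span_one_of_sub_mem (hchar : (2 : F) ≠ 0)
    (hconic : ∀ x : A, x * x - polar q x 1 • x + q x • (1 : A) = 0) {u v : A}
    (hu : polar q u 1 = 0) (hv : polar q v 1 = 0) (hcomm : u * v - v * u ∈ F ∙ (1 : A)) :
    u * v ∈ F ∙ (1 : A) := by
  have hsum : u * v + v * u ∈ F ∙ (1 : A) := by
    rw [mul_add_mul_comm_eq_neg_polar_smul_one hconic hu hv]
    exact Submodule.smul_mem _ _ (Submodule.mem_span_singleton_self 1)
  have h : u * v = (2 : F)⁻¹ • ((u * v + v * u) + (u * v - v * u)) := by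
    rw [add_add_sub_cancel, ← two_smul F, smul_smul, inv_mul_cancel₀ hchar, one_smul]
  rw [h]
  exact Submodule.smul_mem _ _ (add_mem hsum hcomm)

end Field

section Bilinear

variable {F A : Type*} [Field F] [NonAssocRing A] [Module F A] [SMulCommClass F A A]
  [IsScalarTower F A A]

/-- `B(x,y) = -½ q(xy,1)`; on `V` it agrees with the form `½ (q(x,y) - ω(x,y))`. -/
def vidinliForm (q : QuadraticForm F A) : A →ₗ[F] A →ₗ[F] F :=
  (LinearMap.mul F A).compr₂ ((-(2 : F)⁻¹) • (polarBilin q).flip 1)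

theorem vidinliForm_apply (q : QuadraticForm F A) (x y : A) :
    vidinliForm q x y = -((2 : F)⁻¹ * polar q (x * y) 1) := by
  simp [vidinliForm]

theorem smul_one_add_mul_smul_one_add (α β : F) (u v : A) :
    (α • (1 : A) + u) * (β • (1 : A) + v) = (α * β) • (1 : A) + α • v + β • u + u * v := by
  simp only [add_mul, mul_add, smul_mul_assoc, mul_smul_comm, one_mul, mul_one]
  module

end Bilinear

theorem stmt1 {F A : Type*} [Field F] [NonAssocRing A] [Module F A]
    [SMulCommClass F A A] [IsScalarTower F A A]
    (hchar : (2 : F) ≠ 0) (q : QuadraticForm F A)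
    (hq1 : q 1 = 1)
    (hconic : ∀ x : A, x * x - QuadraticMap.polar q x 1 • x + q x • (1 : A) = 0)
    (hvid : ∀ x y : A, ∃ c : F, x * y - y * x = c • (1 : A)) :
    IsCompl (F ∙ (1 : A)) (LinearMap.ker ((QuadraticMap.polarBilin q).flip 1)) ∧
    ∃ B : A →ₗ[F] A →ₗ[F] F, ∀ (α β : F) (u v : A),
      u ∈ LinearMap.ker ((QuadraticMap.polarBilin q).flip 1) →
      v ∈ LinearMap.ker ((QuadraticMap.polarBilin q).flip 1) →
      (α • (1 : A) + u) * (β • (1 : A) + v)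
        = (α * β - B u v) • (1 : A) + (α • v + β • u) := by
  refine ⟨isCompl_span_one_ker_polar hchar hq1, vidinliForm q, fun α β u v hu hv => ?_⟩
  have hcomm : u * v - v * u ∈ F ∙ (1 : A) := by
    obtain ⟨c, hc⟩ := hvid u v
    exact Submodule.mem_span_singleton.mpr ⟨c, hc.symm⟩
  obtain ⟨c, hc⟩ := Submodule.mem_span_singleton.mp
    (mul_mem_span_one_of_sub_mem hchar hconic hu hv hcomm)
  have hB : vidinliForm q u v = -c := by
    rw [vidinliForm_apply, ← hc, polar_smul_one_one hq1, inv_mul_cancel_left₀ hchar]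
  rw [smul_one_add_mul_smul_one_add, ← hc, hB]
  module
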